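/- The hierarchy for circuits with only simple registers collapses: for all r ∈ N, Fun_S^r = Fun_S^1. -/

import Mathlib

set_option linter.unusedVariables false

attribute [local instance] Classical.propDecidable

/-- Signal values: stable `zero`, `one`, and metastable `meta`. -/
inductive BM : Type
  | zero
  | one
  | metastable
  deriving DecidableEq

/-- Embedding of stable Boolean values into `BM`. -/
def BM.ofBool : Bool → BM
  | false => BM.zero
  | true => BM.one

/-- `inResM x y` means `y ∈ ResM(x)`, the set of partial resolutions of `x`. -/
def inResM {k : ℕ} (x y : Fin k → BM) : Prop :=
  ∀ i, x i = y i ∨ x i = BM.metastable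

/-- `inRes x y` means `y ∈ Res(x)`, i.e. `y` is a complete (stable) resolution of `x`. -/
def inRes {k : ℕ} (x y : Fin k → BM) : Prop :=
  inResM x y ∧ ∀ i, y i ≠ BM.metastable

/-- The complete resolutions of `x`, viewed as Boolean words. -/
def boolRes {k : ℕ} (x : Fin k → BM) : Set (Fin k → Bool) :=
  { z | ∀ i, x i = BM.ofBool (z i) ∨ x i = BM.metastable }

/-- The metastable (Kleene) extension `f_M : BM^k → BM` of a Boolean function
`f : B^k → B`: it outputs a stable value `b` iff all complete resolutions of the
input evaluate to `b` under `f`, and `meta` otherwise. -/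
noncomputable def kleene {k : ℕ} (f : (Fin k → Bool) → Bool) (x : Fin k → BM) : BM :=
  if ∀ z ∈ boolRes x, f z = false then BM.zero
  else if ∀ z ∈ boolRes x, f z = true then BM.one
  else BM.metastable

/-- Combinational logic with `m` input nodes: formulas built from inputs,
`BM`-constants (gates of indegree 0), and gates computing the metastable extension
of a Boolean function of their in-neighbors.  (A DAG evaluates exactly like the
formula obtained by unsharing, so this faithfully captures evaluation of
combinational logic DAGs.) -/
inductive Comb (m : ℕ) : Type
  | input : Fin m → Comb m
  | const : BM → Comb m
  | gate : (j : ℕ) → ((Fin j → Bool) → Bool) → (Fin j → Comb m) → Comb m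

/-- Recursive evaluation of combinational logic on input `x ∈ BM^m`. -/
noncomputable def Comb.eval {m : ℕ} (x : Fin m → BM) : Comb m → BM
  | .input i => x i
  | .const b => b
  | .gate _ f cs => kleene f (fun t => (cs t).eval x)

/-- Register types: simple, mask-0, mask-1. -/
inductive RegType : Type
  | simple
  | mask0
  | mask1
  deriving DecidableEq

/-- `regRead t b (o, b')` holds iff a register of type `t` in state `b` can be read
with read value `o`, moving to state `b'`:  a register in a stable state yields that
state and keeps it; a simple register in state `meta` yields `meta` and stays `meta`;
a mask-`c` register in state `meta` either yields `c` staying in state `meta`, or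
yields `meta` changing its state to `1 - c`. -/
def regRead : RegType → BM → BM × BM → Prop
  | _, BM.zero, p => p = (BM.zero, BM.zero)
  | _, BM.one, p => p = (BM.one, BM.one)
  | RegType.simple, BM.metastable, p => p = (BM.metastable, BM.metastable)
  | RegType.mask0, BM.metastable, p => p = (BM.zero, BM.metastable) ∨ p = (BM.metastable, BM.one)
  | RegType.mask1, BM.metastable, p => p = (BM.one, BM.metastable) ∨ p = (BM.metastable, BM.zero)

/-- A circuit with `m` input, `k` local and `n` output registers: a type for each
register, combinational logic with `m + k` input nodes (one per non-output register)
and `k + n` output nodes (one per non-input register), and an initialization of the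
non-input registers. -/
structure Circuit (m k n : ℕ) : Type where
  inType : Fin m → RegType
  locType : Fin k → RegType
  outType : Fin n → RegType
  logic : Fin (k + n) → Comb (m + k)
  init : Fin (k + n) → BM

/-- A state of a circuit: values of input, local, and output registers. -/
structure CState (m k n : ℕ) : Type where
  inp : Fin m → BM
  loc : Fin k → BM
  out : Fin n → BM

/-- A state as a word in `BM^{m+k+n}`. -/
def CState.toVec {m k n : ℕ} (s : CState m k n) : Fin (m + (k + n)) → BM :=
  Fin.append s.inp (Fin.append s.loc s.out)

/-- Read phase: `o ∈ BM^{m+k}` are possible read values of the non-output registers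
in state `s`, and `ι'` the corresponding successor states of the input registers. -/
def ReadRel {m k n : ℕ} (C : Circuit m k n) (s : CState m k n)
    (o : Fin (m + k) → BM) (ι' : Fin m → BM) : Prop :=
  (∀ i : Fin m, regRead (C.inType i) (s.inp i) (o (Fin.castAdd k i), ι' i)) ∧
  (∀ j : Fin k, ∃ st', regRead (C.locType j) (s.loc j) (o (Fin.natAdd m j), st'))

/-- Evaluation phase: `f^G` applied to the read values. -/
noncomputable def evalLogic {m k n : ℕ} (C : Circuit m k n) (o : Fin (m + k) → BM) :
    Fin (k + n) → BM :=
  fun j => (C.logic j).eval o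

/-- `Write^C(s)`: possible values written to the non-input registers. -/
def WriteSet {m k n : ℕ} (C : Circuit m k n) (s : CState m k n) :
    Set (Fin (k + n) → BM) :=
  { w | ∃ o ι', ReadRel C s o ι' ∧ inResM (evalLogic C o) w }

/-- Successor-state relation: read all non-output registers, evaluate the logic,
and write an arbitrary partial resolution of the result to the non-input registers. -/
def Succ {m k n : ℕ} (C : Circuit m k n) (s s' : CState m k n) : Prop :=
  ∃ o ι', ReadRel C s o ι' ∧ s'.inp = ι' ∧
    inResM (evalLogic C o) (Fin.append s'.loc s'.out)

/-- `reach C r s₀ = S^C_r(s₀)`: states reachable in `r` rounds from `s₀`. -/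
def reach {m k n : ℕ} (C : Circuit m k n) : ℕ → CState m k n → Set (CState m k n)
  | 0, s => {s}
  | r + 1, s => { t | ∃ u ∈ reach C r s, Succ C u t }

/-- The initial state of `C` with input `ι`. -/
def initState {m k n : ℕ} (C : Circuit m k n) (ι : Fin m → BM) : CState m k n :=
  ⟨ι, fun j => C.init (Fin.castAdd n j), fun j => C.init (Fin.natAdd k j)⟩

/-- `C_r(ι)`: possible outputs after `r` rounds on input `ι`. -/
def Cout {m k n : ℕ} (C : Circuit m k n) (r : ℕ) (ι : Fin m → BM) :
    Set (Fin n → BM) :=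
  { y | ∃ s ∈ reach C r (initState C ι), y = s.out }

/-- `r` rounds of `C` implement `f` iff `C_r(ι) ⊆ f(ι)` for all inputs `ι`. -/
def Implements {m k n : ℕ} (C : Circuit m k n) (r : ℕ)
    (f : (Fin m → BM) → Set (Fin n → BM)) : Prop :=
  ∀ ι, Cout C r ι ⊆ f ι

/-- All registers of the circuit are simple. -/
def OnlySimple {m k n : ℕ} (C : Circuit m k n) : Prop :=
  (∀ i, C.inType i = RegType.simple) ∧ (∀ j, C.locType j = RegType.simple) ∧
    (∀ j, C.outType j = RegType.simple)

/-- `Fun_S^r`: functions implementable by `r` rounds of circuits with only simple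
registers. -/
def FunS (r m n : ℕ) : Set ((Fin m → BM) → Set (Fin n → BM)) :=
  { f | ∃ k, ∃ C : Circuit m k n, OnlySimple C ∧ Implements C r f }

/-- `Fun_M^r`: functions implementable by `r` rounds of circuits with arbitrary
register types. -/
def FunM (r m n : ℕ) : Set ((Fin m → BM) → Set (Fin n → BM)) :=
  { f | ∃ k, ∃ C : Circuit m k n, Implements C r f }

/-- A pivotal sequence over `BM^N`: consecutive elements differ in exactly one bit,
and that bit is `meta` in one of the two elements. -/
def PivotalSeq {N ℓ : ℕ} (x : Fin (ℓ + 1) → Fin N → BM) : Prop :=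
  ∀ i : Fin ℓ,
    ∃ j : Fin N,
      x i.castSucc j ≠ x i.succ j ∧
      (x i.castSucc j = BM.metastable ∨ x i.succ j = BM.metastable) ∧
      ∀ j' : Fin N, x i.castSucc j' ≠ x i.succ j' → j' = j

/-- A function `f : BM^m → Pow(BM^n)` is natural iff it is bit-wise and closed
(a product of component functions each taking values in `{{0}, {1}, BM}`)
and specific (stabilizing the input restricts the output). -/
def IsNatural {m n : ℕ} (f : (Fin m → BM) → Set (Fin n → BM)) : Prop :=
  (∃ g : Fin n → (Fin m → BM) → Set BM,
      (∀ i x, g i x = {BM.zero} ∨ g i x = {BM.one} ∨ g i x = (Set.univ : Set BM)) ∧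
      (∀ x, f x = { y | ∀ i, y i ∈ g i x })) ∧
  (∀ x y, inRes x y → f y ⊆ f x)

/-- The `i`-th component of the metastable closure of `f : B^m → B^n`. -/
noncomputable def mclosureC {m n : ℕ} (f : (Fin m → Bool) → Fin n → Bool)
    (x : Fin m → BM) (i : Fin n) : Set BM :=
  if ∀ z ∈ boolRes x, f z i = false then {BM.zero}
  else if ∀ z ∈ boolRes x, f z i = true then {BM.one}
  else Set.univ

/-- The metastable closure `[f]_M : BM^m → Pow(BM^n)` of `f : B^m → B^n`. -/
noncomputable def mclosure {m n : ℕ} (f : (Fin m → Bool) → Fin n → Bool)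
    (x : Fin m → BM) : Set (Fin n → BM) :=
  { y | ∀ i, y i ∈ mclosureC f x i }
/-! With only simple registers every read returns the register's state, so a round just
replaces the non-input registers by a partial resolution of the logic applied to the current
state. Kleene evaluation is monotone under resolution, so every run is a resolution of the exact
run that never resolves anything. Hence `r` rounds can be compressed into one by unrolling the
local-register logic `r - 1` times into the output logic, and conversely one round can be
stretched to `r` by letting the local registers hold their values and recomputing the outputs
in every round. -/

def inResM1 (a b : BM) : Prop := a = b ∨ a = BM.metastable

lemma inResM1_trans {a b c : BM} (hab : inResM1 a b) (hbc : inResM1 b c) : inResM1 a c := by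
  rcases hab with rfl | h
  · exact hbc
  · exact Or.inr h

lemma inResM_refl {k : ℕ} (x : Fin k → BM) : inResM x x := fun _ => Or.inl rfl

lemma inResM_trans {k : ℕ} {x y z : Fin k → BM} (hxy : inResM x y) (hyz : inResM y z) :
    inResM x z :=
  fun i => inResM1_trans (hxy i) (hyz i)

lemma inResM_append_iff {p q : ℕ} {a c : Fin p → BM} {b d : Fin q → BM} :
    inResM (Fin.append a b) (Fin.append c d) ↔ inResM a c ∧ inResM b d := by
  simp only [inResM, Fin.forall_fin_add, Fin.append_left, Fin.append_right]

lemma boolRes_nonempty {k : ℕ} (x : Fin k → BM) : (boolRes x).Nonempty := by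
  refine ⟨fun i => decide (x i = BM.one), fun i => ?_⟩
  cases h : x i <;> simp [BM.ofBool, h]

lemma boolRes_anti {k : ℕ} {x y : Fin k → BM} (h : inResM x y) : boolRes y ⊆ boolRes x := by
  intro z hz i
  rcases h i with hxy | hx
  · rw [hxy]
    exact hz i
  · exact Or.inr hx

lemma kleene_mono {k : ℕ} (f : (Fin k → Bool) → Bool) {x y : Fin k → BM} (h : inResM x y) :
    inResM1 (kleene f x) (kleene f y) := by
  unfold kleene
  by_cases h0 : ∀ z ∈ boolRes x, f z = false
  · rw [if_pos h0, if_pos fun z hz => h0 z (boolRes_anti h hz)]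
    exact Or.inl rfl
  by_cases h1 : ∀ z ∈ boolRes x, f z = true
  · have hy1 : ∀ z ∈ boolRes y, f z = true := fun z hz => h1 z (boolRes_anti h hz)
    obtain ⟨z, hz⟩ := boolRes_nonempty y
    have hy0 : ¬ ∀ z ∈ boolRes y, f z = false := fun hy0 => by simpa [hy1 z hz] using hy0 z hz
    rw [if_neg h0, if_pos h1, if_neg hy0, if_pos hy1]
    exact Or.inl rfl
  · rw [if_neg h0, if_neg h1]
    exact Or.inr rfl

lemma Comb.eval_mono {m : ℕ} {x y : Fin m → BM} (h : inResM x y) :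
    ∀ c : Comb m, inResM1 (c.eval x) (c.eval y)
  | .input i => h i
  | .const _ => Or.inl rfl
  | .gate _ f cs => kleene_mono f fun t => Comb.eval_mono h (cs t)

def Comb.subst {j m : ℕ} : Comb j → (Fin j → Comb m) → Comb m
  | .input i, σ => σ i
  | .const b, _ => .const b
  | .gate a f cs, σ => .gate a f fun t => (cs t).subst σ

lemma Comb.eval_subst {j m : ℕ} (x : Fin m → BM) (σ : Fin j → Comb m) :
    ∀ c : Comb j, (c.subst σ).eval x = c.eval fun i => (σ i).eval x
  | .input _ => rfl
  | .const _ => rfl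
  | .gate _ f cs => congrArg (kleene f) (funext fun t => Comb.eval_subst x σ (cs t))

namespace Circuit

variable {m k n : ℕ}

noncomputable def nextLoc (C : Circuit m k n) (ι : Fin m → BM) (L : Fin k → BM) : Fin k → BM :=
  fun j => evalLogic C (Fin.append ι L) (Fin.castAdd n j)

noncomputable def nextOut (C : Circuit m k n) (ι : Fin m → BM) (L : Fin k → BM) : Fin n → BM :=
  fun j => evalLogic C (Fin.append ι L) (Fin.natAdd k j)

lemma evalLogic_append (C : Circuit m k n) (ι : Fin m → BM) (L : Fin k → BM) :
    evalLogic C (Fin.append ι L) = Fin.append (C.nextLoc ι L) (C.nextOut ι L) :=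
  Fin.append_castAdd_natAdd.symm

lemma nextOut_mono (C : Circuit m k n) (ι : Fin m → BM) {L L' : Fin k → BM}
    (h : inResM L L') : inResM (C.nextOut ι L) (C.nextOut ι L') :=
  fun j => Comb.eval_mono (inResM_append_iff.mpr ⟨inResM_refl ι, h⟩) _

section OnlySimple

variable {C : Circuit m k n}

lemma readRel_iff_of_onlySimple (hC : OnlySimple C) {s : CState m k n}
    {o : Fin (m + k) → BM} {ι' : Fin m → BM} :
    ReadRel C s o ι' ↔ o = Fin.append s.inp s.loc ∧ ι' = s.inp := by
  obtain ⟨hin, hloc, -⟩ := hC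
  have hsimple : ∀ b p, regRead RegType.simple b p ↔ p = (b, b) := by
    intro b p
    cases b <;> simp [regRead]
  simp only [ReadRel, hin, hloc, hsimple, Prod.ext_iff, exists_eq_right, funext_iff,
    Fin.forall_fin_add, Fin.append_left, Fin.append_right, forall_and]
  exact and_right_comm

lemma succ_iff_of_onlySimple (hC : OnlySimple C) {s s' : CState m k n} :
    Succ C s s' ↔ s'.inp = s.inp ∧ inResM (C.nextLoc s.inp s.loc) s'.loc ∧
      inResM (C.nextOut s.inp s.loc) s'.out := by
  constructor
  · rintro ⟨o, ι', hread, hinp, h⟩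
    obtain ⟨rfl, rfl⟩ := (readRel_iff_of_onlySimple hC).mp hread
    rw [evalLogic_append, inResM_append_iff] at h
    exact ⟨hinp, h⟩
  · rintro ⟨hinp, h⟩
    refine ⟨_, _, (readRel_iff_of_onlySimple hC).mpr ⟨rfl, rfl⟩, hinp, ?_⟩
    rwa [evalLogic_append, inResM_append_iff]

lemma mem_cout_succ_iff (hC : OnlySimple C) {t : ℕ} {ι : Fin m → BM} {y : Fin n → BM} :
    y ∈ Cout C (t + 1) ι ↔
      ∃ u ∈ reach C t (initState C ι), inResM (C.nextOut u.inp u.loc) y := by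
  constructor
  · rintro ⟨s, ⟨u, hu, hsucc⟩, rfl⟩
    exact ⟨u, hu, ((succ_iff_of_onlySimple hC).mp hsucc).2.2⟩
  · rintro ⟨u, hu, hy⟩
    refine ⟨⟨u.inp, C.nextLoc u.inp u.loc, y⟩, ⟨u, hu, ?_⟩, rfl⟩
    exact (succ_iff_of_onlySimple hC).mpr ⟨rfl, inResM_refl _, hy⟩

lemma exists_mem_reach_loc_eq_iterate (hC : OnlySimple C) (ι : Fin m → BM) (t : ℕ) :
    ∃ u ∈ reach C t (initState C ι),
      u.inp = ι ∧ u.loc = (C.nextLoc ι)^[t] (initState C ι).loc := by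
  induction t with
  | zero => exact ⟨_, rfl, rfl, rfl⟩
  | succ t ih =>
    obtain ⟨u, hu, hinp, hloc⟩ := ih
    refine ⟨⟨ι, C.nextLoc ι u.loc, C.nextOut ι u.loc⟩, ⟨u, hu, ?_⟩, rfl, ?_⟩
    · rw [succ_iff_of_onlySimple hC, hinp]
      exact ⟨rfl, inResM_refl _, inResM_refl _⟩
    · rw [Function.iterate_succ_apply', ← hloc]

end OnlySimple

/-- The local registers of this circuit hold their values. -/
def withOutputs (C : Circuit m k n) (out : Fin n → Comb (m + k)) : Circuit m k n where
  inType _ := .simple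
  locType _ := .simple
  outType _ := .simple
  logic := Fin.append (fun j => .input (Fin.natAdd m j)) out
  init := C.init

variable (C : Circuit m k n) (out : Fin n → Comb (m + k))

lemma onlySimple_withOutputs : OnlySimple (C.withOutputs out) :=
  ⟨fun _ => rfl, fun _ => rfl, fun _ => rfl⟩

lemma nextLoc_withOutputs (ι : Fin m → BM) (L : Fin k → BM) :
    (C.withOutputs out).nextLoc ι L = L := by
  funext j
  simp [nextLoc, evalLogic, withOutputs, Comb.eval]

lemma nextOut_withOutputs (ι : Fin m → BM) (L : Fin k → BM) :
    (C.withOutputs out).nextOut ι L = fun j => (out j).eval (Fin.append ι L) := by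
  funext j
  simp [nextOut, evalLogic, withOutputs]

lemma initState_withOutputs (ι : Fin m → BM) :
    initState (C.withOutputs out) ι = initState C ι :=
  rfl

lemma of_mem_reach_withOutputs {ι : Fin m → BM} {t : ℕ} {u : CState m k n}
    (hu : u ∈ reach (C.withOutputs out) t (initState C ι)) :
    u.inp = ι ∧ inResM (initState C ι).loc u.loc := by
  induction t generalizing u with
  | zero =>
    rw [show u = initState C ι from hu]
    exact ⟨rfl, inResM_refl _⟩
  | succ t ih =>
    obtain ⟨v, hv, hsucc⟩ := hu
    obtain ⟨hinp, hloc, -⟩ := (succ_iff_of_onlySimple (onlySimple_withOutputs C out)).mp hsucc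
    rw [nextLoc_withOutputs] at hloc
    exact ⟨hinp.trans (ih hv).1, inResM_trans (ih hv).2 hloc⟩

lemma cout_withOutputs_succ_subset (t : ℕ) (ι : Fin m → BM) :
    Cout (C.withOutputs out) (t + 1) ι ⊆ Cout (C.withOutputs out) 1 ι := by
  have hS := onlySimple_withOutputs C out
  intro y hy
  obtain ⟨u, hu, hy⟩ := (mem_cout_succ_iff hS).mp hy
  obtain ⟨hinp, hloc⟩ := of_mem_reach_withOutputs C out hu
  rw [hinp] at hy
  exact (mem_cout_succ_iff hS).mpr
    ⟨initState C ι, rfl, inResM_trans ((C.withOutputs out).nextOut_mono ι hloc) hy⟩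

/-- Terms over the input and local registers computing their values after `t` exact rounds. -/
def unrolled (C : Circuit m k n) : ℕ → Fin (m + k) → Comb (m + k)
  | 0 => Comb.input
  | t + 1 => Fin.append (fun i => .input (Fin.castAdd k i))
      fun j => (C.logic (Fin.castAdd n j)).subst (C.unrolled t)

lemma eval_unrolled (ι : Fin m → BM) (L : Fin k → BM) (t : ℕ) :
    (fun i => (C.unrolled t i).eval (Fin.append ι L)) =
      Fin.append ι ((C.nextLoc ι)^[t] L) := by
  induction t with
  | zero => rfl
  | succ t ih =>
    funext i
    refine Fin.addCases (fun i => ?_) (fun j => ?_) i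
    · simp [unrolled, Comb.eval]
    · simp only [unrolled, Fin.append_right, Comb.eval_subst, ih,
        Function.iterate_succ_apply']
      rfl

def unroll (C : Circuit m k n) (t : ℕ) : Circuit m k n :=
  C.withOutputs fun j => (C.logic (Fin.natAdd k j)).subst (C.unrolled t)

lemma cout_unroll_one_subset {C : Circuit m k n} (hC : OnlySimple C) (t : ℕ)
    (ι : Fin m → BM) : Cout (C.unroll t) 1 ι ⊆ Cout C (t + 1) ι := by
  intro y hy
  obtain ⟨u, rfl, hy⟩ := (mem_cout_succ_iff (onlySimple_withOutputs _ _)).mp hy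
  obtain ⟨v, hv, hinp, hloc⟩ := exists_mem_reach_loc_eq_iterate hC ι t
  refine (mem_cout_succ_iff hC).mpr ⟨v, hv, ?_⟩
  rw [hinp, hloc]
  simp only [initState_withOutputs, nextOut_withOutputs, Comb.eval_subst,
    eval_unrolled] at hy
  exact hy

end Circuit

/-- the hierarchy for circuits with only simple registers collapses:
for all `r ∈ ℕ`, `Fun_S^r = Fun_S^1`. -/
theorem funS_hierarchy_collapses (m n : ℕ) :
    ∀ r : ℕ, 0 < r → FunS r m n = FunS 1 m n := by
  intro r hr
  obtain ⟨t, rfl⟩ : ∃ t, r = t + 1 := ⟨r - 1, by omega⟩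
  ext f
  constructor
  · rintro ⟨k, C, hC, himp⟩
    exact ⟨k, C.unroll t, Circuit.onlySimple_withOutputs _ _,
      fun ι => (Circuit.cout_unroll_one_subset hC t ι).trans (himp ι)⟩
  · rintro ⟨k, C, hC, himp⟩
    exact ⟨k, C.unroll 0, Circuit.onlySimple_withOutputs _ _, fun ι =>
      (C.cout_withOutputs_succ_subset _ t ι).trans
        ((Circuit.cout_unroll_one_subset hC 0 ι).trans (himp ι))⟩
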